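/- arXiv:2504.19428 — 2 statements merged into one kernel-verified Lean document; each statement's English description precedes it below -/
import Mathlib

section
/- For every real α, all 0 < s < t, every z > 0 and every x > 0, the limit as x₀ → 0⁺ of f₊(x₀, z; t−s; α) / f₊(x₀, x; t; α) equals (μ(t−s;α) β(t;α)) / (β(t−s;α) μ(t;α)) · e^{−z/β(t−s;α)} · e^{x/β(t;α)}. (This limit is the content of Theorem 5: multiplying it by f₊(z, x; s; α) gives the density of the population size at the intermediate time t − s for a Feller diffusion descended from a single founder at time zero and conditioned on X(t) = x.) -/
open MeasureTheory Real Filter Set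

/-- `muF t α` is the function μ(t;α) = 2α e^{αt}/(e^{αt} − 1) for α ≠ 0, and 2/t for α = 0. -/
noncomputable def muF (t α : ℝ) : ℝ :=
  if α = 0 then 2 / t else 2 * α * Real.exp (α * t) / (Real.exp (α * t) - 1)

/-- `betaF t α` is the function β(t;α) = (e^{αt} − 1)/(2α) for α ≠ 0, and t/2 for α = 0. -/
noncomputable def betaF (t α : ℝ) : ℝ :=
  if α = 0 then t / 2 else (Real.exp (α * t) - 1) / (2 * α)

/-- `fl l x₀ x t α` is the term f_l(x₀, x; t; α), the joint density contribution from `l`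
founding families. -/
noncomputable def fl (l : ℕ) (x₀ x t α : ℝ) : ℝ :=
  Real.exp (-(x₀ * muF t α)) * (x₀ * muF t α) ^ l / (Nat.factorial l : ℝ) *
    (x ^ (l - 1) * Real.exp (-(x / betaF t α)) / (betaF t α ^ l * (Nat.factorial (l - 1) : ℝ)))

/-- `fplus x₀ x t α` = ∑_{l=1}^∞ f_l(x₀, x; t; α), the absolutely continuous part of the
Feller-diffusion transition density. -/
noncomputable def fplus (x₀ x t α : ℝ) : ℝ := ∑' l : ℕ, fl (l + 1) x₀ x t α

lemma betaF_pos (t α : ℝ) (ht : 0 < t) : 0 < betaF t α := by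
  unfold betaF
  split_ifs with h
  · linarith
  · rcases lt_or_gt_of_ne h with hneg | hpos
    · apply div_pos_of_neg_of_neg
      · have : α * t < 0 := mul_neg_of_neg_of_pos hneg ht
        have := Real.exp_lt_one_iff.mpr this
        linarith
      · linarith
    · apply div_pos
      · have : 0 < α * t := mul_pos hpos ht
        have := Real.one_lt_exp_iff.mpr this
        linarith
      · linarith

lemma muF_pos (t α : ℝ) (ht : 0 < t) : 0 < muF t α := by
  unfold muF
  split_ifs with h
  · positivity
  · rcases lt_or_gt_of_ne h with hneg | hpos
    · apply div_pos_of_neg_of_neg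
      · have := Real.exp_pos (α * t)
        nlinarith
      · have : α * t < 0 := mul_neg_of_neg_of_pos hneg ht
        have := Real.exp_lt_one_iff.mpr this
        linarith
    · apply div_pos
      · have := Real.exp_pos (α * t)
        nlinarith
      · have : 0 < α * t := mul_pos hpos ht
        have := Real.one_lt_exp_iff.mpr this
        linarith

lemma fplus_ratio_tendsto (t α x : ℝ) (ht : 0 < t) (hx : 0 < x) :
    Filter.Tendsto (fun x₀ => fplus x₀ x t α / x₀) (nhdsWithin 0 (Set.Ioi 0))
      (nhds (muF t α * Real.exp (-(x / betaF t α)) / betaF t α)) := by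
  set μ := muF t α with hμdef
  set β := betaF t α with hβdef
  have hμ : 0 < μ := muF_pos t α ht
  have hβ : 0 < β := betaF_pos t α ht
  set E : ℝ := Real.exp (-(x / β)) with hE
  have hEpos : 0 < E := Real.exp_pos _
  set c : ℕ → ℝ := fun l =>
    μ ^ (l + 1) / (Nat.factorial (l + 1) : ℝ) *
      (x ^ l * E / (β ^ (l + 1) * (Nat.factorial l : ℝ))) with hc
  have hcpos : ∀ l, 0 < c l := by
    intro l
    have h1 : (0:ℝ) < (Nat.factorial (l+1) : ℝ) := by positivity
    have h2 : (0:ℝ) < (Nat.factorial l : ℝ) := by positivity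
    positivity
  -- closed form of c in terms of K * r^l / l! / (l+1)!
  set K : ℝ := μ * E / β with hK
  set r : ℝ := μ * x / β with hr
  have hceq : ∀ l, c l = K * (r ^ l / (Nat.factorial l : ℝ)) / (Nat.factorial (l + 1) : ℝ) := by
    intro l
    have h1 : ((Nat.factorial (l+1) : ℝ)) ≠ 0 := by positivity
    have h2 : ((Nat.factorial l : ℝ)) ≠ 0 := by positivity
    simp only [hc, hK, hr, div_pow, mul_pow]
    rw [Nat.factorial_succ]
    push_cast
    field_simp
    ring
  have hSum : Summable c := by
    have hle : ∀ l, c l ≤ K * (r ^ l / (Nat.factorial l : ℝ)) := by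
      intro l
      rw [hceq l]
      apply div_le_self
      · have h0 : (0:ℝ) < (Nat.factorial l : ℝ) := by positivity
        have hrnn : 0 ≤ r := by positivity
        have hKnn : 0 ≤ K := by positivity
        positivity
      · exact_mod_cast Nat.one_le_iff_ne_zero.mpr (Nat.factorial_ne_zero _)
    exact Summable.of_nonneg_of_le (fun l => (hcpos l).le) hle
      ((Real.summable_pow_div_factorial r).mul_left K)
  have hc0 : c 0 = μ * E / β := by simp [hc, Nat.factorial]; ring
  -- fl (l+1) in terms of c
  have hfl : ∀ (x₀ : ℝ) (l : ℕ),
      fl (l + 1) x₀ x t α = Real.exp (-(x₀ * μ)) * (x₀ ^ (l + 1) * c l) := by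
    intro x₀ l
    simp only [fl, hc, ← hμdef, ← hβdef, ← hE, Nat.add_sub_cancel, mul_pow]
    ring
  have hfplus : ∀ x₀ : ℝ, fplus x₀ x t α =
      Real.exp (-(x₀ * μ)) * (x₀ * ∑' l : ℕ, x₀ ^ l * c l) := by
    intro x₀
    unfold fplus
    simp only [hfl]
    rw [tsum_mul_left, ← tsum_mul_left (a := x₀)]
    congr 1
    · congr 1
      ext l
      rw [pow_succ]
      ring
  -- h y := ∑' l, y^l * c l tends to c 0
  have hSum' : ∀ y : ℝ, y ∈ Set.Ioo (0:ℝ) 1 → Summable (fun l => y ^ l * c l) := by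
    intro y hy
    apply Summable.of_nonneg_of_le
      (fun l => mul_nonneg (pow_nonneg hy.1.le l) (hcpos l).le) _ hSum
    intro l
    calc y ^ l * c l ≤ 1 * c l := by
          apply mul_le_mul_of_nonneg_right _ (hcpos l).le
          exact pow_le_one₀ hy.1.le hy.2.le
      _ = c l := one_mul _
  have hSumTail : Summable (fun l => c (l + 1)) := (summable_nat_add_iff 1).mpr hSum
  set C : ℝ := ∑' l : ℕ, c (l + 1) with hC
  have hCnn : 0 ≤ C := tsum_nonneg fun l => (hcpos _).le
  have hhle : ∀ y ∈ Set.Ioo (0:ℝ) 1, (∑' l : ℕ, y ^ l * c l) ≤ c 0 + y * C := by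
    intro y hy
    rw [Summable.tsum_eq_zero_add (hSum' y hy)]
    simp only [pow_zero, one_mul]
    gcongr
    rw [← tsum_mul_left]
    apply Summable.tsum_le_tsum _ _ (hSumTail.mul_left y)
    · intro l
      rw [pow_succ]
      calc y ^ l * y * c (l + 1) ≤ 1 * y * c (l + 1) := by
            apply mul_le_mul_of_nonneg_right _ (hcpos _).le
            apply mul_le_mul_of_nonneg_right _ hy.1.le
            exact pow_le_one₀ hy.1.le hy.2.le
        _ = y * c (l + 1) := by ring
    · apply Summable.of_nonneg_of_le
        (fun l => mul_nonneg (pow_nonneg hy.1.le _) (hcpos _).le) _ hSumTail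
      intro l
      calc y ^ (l+1) * c (l+1) ≤ 1 * c (l+1) := by
            apply mul_le_mul_of_nonneg_right _ (hcpos _).le
            exact pow_le_one₀ hy.1.le hy.2.le
        _ = c (l+1) := one_mul _
  have hhge : ∀ y ∈ Set.Ioo (0:ℝ) 1, c 0 ≤ (∑' l : ℕ, y ^ l * c l) := by
    intro y hy
    have := Summable.le_tsum (hSum' y hy) 0
      (fun j _ => mul_nonneg (pow_nonneg hy.1.le j) (hcpos j).le)
    simpa using this
  have hmem : Set.Ioo (0:ℝ) 1 ∈ nhdsWithin (0:ℝ) (Set.Ioi 0) :=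
    Ioo_mem_nhdsGT_of_mem (by constructor <;> norm_num)
  have hhtendsto : Filter.Tendsto (fun y : ℝ => ∑' l : ℕ, y ^ l * c l)
      (nhdsWithin 0 (Set.Ioi 0)) (nhds (c 0)) := by
    apply tendsto_of_tendsto_of_tendsto_of_le_of_le'
      (g := fun _ : ℝ => c 0) (h := fun y : ℝ => c 0 + y * C)
    · exact tendsto_const_nhds
    · have : Filter.Tendsto (fun y : ℝ => c 0 + y * C) (nhds 0) (nhds (c 0 + 0 * C)) := by
        exact (tendsto_id.mul tendsto_const_nhds).const_add _
      simpa using this.mono_left nhdsWithin_le_nhds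
    · filter_upwards [hmem] with y hy using hhge y hy
    · filter_upwards [hmem] with y hy using hhle y hy
  have hexp : Filter.Tendsto (fun x₀ : ℝ => Real.exp (-(x₀ * μ)))
      (nhdsWithin 0 (Set.Ioi 0)) (nhds 1) := by
    have : Filter.Tendsto (fun x₀ : ℝ => Real.exp (-(x₀ * μ))) (nhds 0)
        (nhds (Real.exp (-(0 * μ)))) :=
      (Real.continuous_exp.comp ((continuous_id.mul continuous_const).neg)).tendsto 0
    simpa using this.mono_left nhdsWithin_le_nhds
  have : Filter.Tendsto (fun x₀ : ℝ => Real.exp (-(x₀ * μ)) * ∑' l : ℕ, x₀ ^ l * c l)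
      (nhdsWithin 0 (Set.Ioi 0)) (nhds (1 * c 0)) := hexp.mul hhtendsto
  rw [one_mul, hc0] at this
  apply this.congr'
  filter_upwards [self_mem_nhdsWithin] with x₀ hx₀
  rw [hfplus x₀]
  field_simp [ne_of_gt (show (0:ℝ) < x₀ from hx₀)]

theorem stmt10 (α s t z x : ℝ) (hs : 0 < s) (hst : s < t) (hz : 0 < z) (hx : 0 < x) :
    Filter.Tendsto (fun x₀ => fplus x₀ z (t - s) α / fplus x₀ x t α)
      (nhdsWithin 0 (Set.Ioi 0))
      (nhds ((muF (t - s) α * betaF t α) / (betaF (t - s) α * muF t α) *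
        Real.exp (-(z / betaF (t - s) α)) * Real.exp (x / betaF t α))) := by
  have ht : 0 < t := lt_trans hs hst
  have hts : 0 < t - s := by linarith
  have h1 := fplus_ratio_tendsto (t - s) α z hts hz
  have h2 := fplus_ratio_tendsto t α x ht hx
  have hμ1 := muF_pos (t - s) α hts
  have hβ1 := betaF_pos (t - s) α hts
  have hμ2 := muF_pos t α ht
  have hβ2 := betaF_pos t α ht
  have hden : muF t α * Real.exp (-(x / betaF t α)) / betaF t α ≠ 0 := by
    have := Real.exp_pos (-(x / betaF t α))
    positivity
  have hdiv := h1.div h2 hden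
  have heq : (muF (t-s) α * Real.exp (-(z / betaF (t-s) α)) / betaF (t-s) α) /
      (muF t α * Real.exp (-(x / betaF t α)) / betaF t α) =
      (muF (t - s) α * betaF t α) / (betaF (t - s) α * muF t α) *
        Real.exp (-(z / betaF (t - s) α)) * Real.exp (x / betaF t α) := by
    rw [Real.exp_neg (x / betaF t α)]
    have h3 : Real.exp (x / betaF t α) ≠ 0 := Real.exp_ne_zero _
    field_simp
  rw [heq] at hdiv
  apply hdiv.congr'
  filter_upwards [self_mem_nhdsWithin] with x₀ hx₀
  have hne : x₀ ≠ 0 := ne_of_gt (hx₀ : (0:ℝ) < x₀)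
  simp only [Pi.div_apply]
  rw [div_div_div_comm, div_self hne, div_one]
end

section
/- For every real α ≥ 0, every s > 0, every z > 0 and every x > 0, one has ∫_s^∞ (1/2) · (μ(s;α)² β(t;α) μ(t−s;α)) / (β(s;α)² μ(t;α) β(t−s;α)) · z x · e^{−z U(t,s;α)} · e^{−x(1/β(s;α) − 1/β(t;α))} · (x/2)(μ(t;α)/β(t;α)) e^{−x/β(t;α)} dt = (1/2) · (μ(s;α)/β(s;α))² · x² · e^{−x/β(s;α)} · e^{−z μ(s;α)}. (This is Theorem 11: the joint density of the time back to the MRCA and the contemporaneous population size under an improper uniform prior on the time T₁ since a single founding ancestor, conditioned on current population x.) -/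
open MeasureTheory Real Filter Set Topology

/-- `UF t s α` = 1/β(t−s;α) + μ(s;α). -/
noncomputable def UF (t s α : ℝ) : ℝ := 1 / betaF (t - s) α + muF s α

lemma betaF_pos_s18 {α : ℝ} (hα : 0 ≤ α) {u : ℝ} (hu : 0 < u) : 0 < betaF u α := by
  unfold betaF
  rcases eq_or_lt_of_le hα with h | h
  · rw [if_pos h.symm]; linarith
  · rw [if_neg h.ne']
    apply div_pos _ (by linarith)
    have h1 : α * u ≠ 0 := by positivity
    have := Real.add_one_lt_exp h1
    nlinarith [mul_pos h hu]

lemma muF_mul_betaF {α : ℝ} (hα : 0 ≤ α) {u : ℝ} (hu : 0 < u) :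
    muF u α * betaF u α = Real.exp (α * u) := by
  unfold muF betaF
  rcases eq_or_ne α 0 with rfl | h
  · rw [if_pos rfl, if_pos rfl]
    field_simp
    simp
  · rw [if_neg h, if_neg h]
    have hα' : 0 < α := lt_of_le_of_ne hα (Ne.symm h)
    have h1 : α * u ≠ 0 := by positivity
    have he : 1 < Real.exp (α * u) := by nlinarith [Real.add_one_lt_exp h1, mul_pos hα' hu]
    have he' : Real.exp (α * u) - 1 ≠ 0 := by linarith
    field_simp

lemma muF_pos_s18 {α : ℝ} (hα : 0 ≤ α) {u : ℝ} (hu : 0 < u) : 0 < muF u α := by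
  have hb := betaF_pos_s18 hα hu
  have h := muF_mul_betaF hα hu
  nlinarith [Real.exp_pos (α * u)]

lemma hasDerivAt_betaF (α u : ℝ) :
    HasDerivAt (fun v => betaF v α) (Real.exp (α * u) / 2) u := by
  unfold betaF
  rcases eq_or_ne α 0 with rfl | h
  · simpa using (hasDerivAt_id u).div_const 2
  · have h1 : HasDerivAt (fun v => Real.exp (α * v)) (α * Real.exp (α * u)) u := by
      simpa [mul_comm, Function.comp_def] using (Real.hasDerivAt_exp (α * u)).comp u ((hasDerivAt_id u).const_mul α)
    simp only [if_neg h]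
    refine ((h1.sub_const 1).div_const (2 * α)).congr_deriv ?_
    rw [mul_comm 2 α, mul_div_mul_left _ _ h]

lemma betaF_zero (α : ℝ) : betaF 0 α = 0 := by
  unfold betaF; split <;> simp

lemma betaF_tendsto_atTop {α : ℝ} (hα : 0 ≤ α) :
    Tendsto (fun u => betaF u α) atTop atTop := by
  rcases eq_or_lt_of_le hα with h | h
  · simp only [betaF, ← h, if_pos rfl]
    exact tendsto_id.atTop_div_const (by norm_num)
  · simp only [betaF, if_neg h.ne']
    apply Tendsto.atTop_div_const (by linarith)
    have h1 : Tendsto (fun u : ℝ => α * u) atTop atTop :=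
      Tendsto.const_mul_atTop h tendsto_id
    have h2 := Real.tendsto_exp_atTop.comp h1
    simpa [sub_eq_add_neg] using h2.atTop_add tendsto_const_nhds

lemma alg_key (a b m B md bd z x : ℝ) (hb : b ≠ 0) (hB : B ≠ 0) (hbd : bd ≠ 0)
    (hm : m ≠ 0) :
    (1 / 2) * (a ^ 2 * B * md) / (b ^ 2 * m * bd) * (z * x) *
        Real.exp (-(z * (1 / bd + a))) * Real.exp (-(x * (1 / b - 1 / B))) *
        ((x / 2) * (m / B) * Real.exp (-(x / B)))
      = ((1 / 2) * (a / b) ^ 2 * x ^ 2 * Real.exp (-(x / b)) * Real.exp (-(z * a))) *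
        (Real.exp (-(z * bd⁻¹)) * (z * (md * bd / 2) / bd ^ 2)) := by
  rw [show -(z * (1 / bd + a)) = -(z * bd⁻¹) + -(z * a) from by ring, Real.exp_add,
    show -(x * (1 / b - 1 / B)) = -(x / b) + x / B from by ring, Real.exp_add,
    show -(x / B) = -(x / B) from rfl, Real.exp_neg (x / B)]
  have hS : Real.exp (x / B) ≠ 0 := Real.exp_ne_zero _
  field_simp

theorem stmt18 (α s z x : ℝ) (hα : 0 ≤ α) (hs : 0 < s) (hz : 0 < z) (hx : 0 < x) :
    ∫ t in Set.Ioi s,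
        (1 / 2) * (muF s α ^ 2 * betaF t α * muF (t - s) α) /
            (betaF s α ^ 2 * muF t α * betaF (t - s) α) * (z * x) *
          Real.exp (-(z * UF t s α)) *
          Real.exp (-(x * (1 / betaF s α - 1 / betaF t α))) *
          ((x / 2) * (muF t α / betaF t α) * Real.exp (-(x / betaF t α)))
      = (1 / 2) * (muF s α / betaF s α) ^ 2 * x ^ 2 * Real.exp (-(x / betaF s α)) *
          Real.exp (-(z * muF s α)) := by
  set C : ℝ := (1 / 2) * (muF s α / betaF s α) ^ 2 * x ^ 2 * Real.exp (-(x / betaF s α)) *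
      Real.exp (-(z * muF s α)) with hC
  set g : ℝ → ℝ := fun t => if t ≤ s then 0 else C * Real.exp (-(z * (betaF (t - s) α)⁻¹))
    with hg
  set g' : ℝ → ℝ := fun t =>
      (1 / 2) * (muF s α ^ 2 * betaF t α * muF (t - s) α) /
          (betaF s α ^ 2 * muF t α * betaF (t - s) α) * (z * x) *
        Real.exp (-(z * UF t s α)) *
        Real.exp (-(x * (1 / betaF s α - 1 / betaF t α))) *
        ((x / 2) * (muF t α / betaF t α) * Real.exp (-(x / betaF t α))) with hg'
  have hCpos : 0 < C := by
    have h1 := muF_pos_s18 hα hs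
    have h2 := betaF_pos_s18 hα hs
    positivity
  -- continuity at s within Ici s
  have hcont : ContinuousWithinAt g (Ici s) s := by
    rw [← continuousWithinAt_Ioi_iff_Ici]
    have hgs : g s = 0 := by simp [hg]
    unfold ContinuousWithinAt
    rw [hgs]
    have hb0 : Tendsto (fun t => betaF (t - s) α) (𝓝[>] s) (𝓝[>] 0) := by
      apply tendsto_nhdsWithin_of_tendsto_nhds_of_eventually_within
      · have h1 : Tendsto (fun t : ℝ => t - s) (𝓝[>] s) (𝓝 0) := by
          have h0 : Tendsto (fun t : ℝ => t - s) (𝓝 s) (𝓝 (s - s)) :=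
            (continuous_id.sub continuous_const).tendsto s
          rw [sub_self] at h0
          exact h0.mono_left nhdsWithin_le_nhds
        have h2 := (hasDerivAt_betaF α 0).continuousAt.tendsto
        rw [betaF_zero] at h2
        exact h2.comp h1
      · filter_upwards [self_mem_nhdsWithin] with t ht
        exact betaF_pos_s18 hα (sub_pos.mpr ht)
    have hinv : Tendsto (fun t => (betaF (t - s) α)⁻¹) (𝓝[>] s) atTop :=
      tendsto_inv_nhdsGT_zero.comp hb0
    have hmul : Tendsto (fun t => z * (betaF (t - s) α)⁻¹) (𝓝[>] s) atTop :=
      Tendsto.const_mul_atTop hz hinv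
    have hneg : Tendsto (fun t => -(z * (betaF (t - s) α)⁻¹)) (𝓝[>] s) atBot :=
      tendsto_neg_atTop_atBot.comp hmul
    have hexp : Tendsto (fun t => Real.exp (-(z * (betaF (t - s) α)⁻¹))) (𝓝[>] s) (𝓝 0) :=
      Real.tendsto_exp_atBot.comp hneg
    have := hexp.const_mul C
    rw [mul_zero] at this
    apply this.congr'
    filter_upwards [self_mem_nhdsWithin] with t ht
    simp [hg, not_le.mpr (mem_Ioi.mp ht)]
  -- derivative on Ioi s
  have hderiv : ∀ t ∈ Ioi s, HasDerivAt g (g' t) t := by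
    intro t ht
    have hts : s < t := ht
    have hts' : 0 < t - s := sub_pos.mpr hts
    have ht0 : 0 < t := hs.trans hts
    have hbd : 0 < betaF (t - s) α := betaF_pos_s18 hα hts'
    have hbs : 0 < betaF s α := betaF_pos_s18 hα hs
    have hbt : 0 < betaF t α := betaF_pos_s18 hα ht0
    have hmt : 0 < muF t α := muF_pos_s18 hα ht0
    have h1 : HasDerivAt (fun v => betaF (v - s) α) (Real.exp (α * (t - s)) / 2) t := by
      have := (hasDerivAt_betaF α (t - s)).comp t ((hasDerivAt_id t).sub_const s)
      simpa [Function.comp_def] using this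
    have h2 : HasDerivAt (fun v => -(z * (betaF (v - s) α)⁻¹))
        (z * (Real.exp (α * (t - s)) / 2) / (betaF (t - s) α) ^ 2) t := by
      have := ((h1.inv hbd.ne').const_mul z).neg
      refine this.congr_deriv ?_
      ring
    have h3 : HasDerivAt (fun v => C * Real.exp (-(z * (betaF (v - s) α)⁻¹)))
        (C * (Real.exp (-(z * (betaF (t - s) α)⁻¹)) *
          (z * (Real.exp (α * (t - s)) / 2) / (betaF (t - s) α) ^ 2))) t := by
      have := (h2.exp).const_mul C
      convert this using 1
    have heq : g =ᶠ[𝓝 t] fun v => C * Real.exp (-(z * (betaF (v - s) α)⁻¹)) := by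
      filter_upwards [Ioi_mem_nhds hts] with v hv
      simp [hg, not_le.mpr (mem_Ioi.mp hv)]
    have h4 := h3.congr_of_eventuallyEq heq
    have hval : g' t = C * (Real.exp (-(z * (betaF (t - s) α)⁻¹)) *
        (z * (Real.exp (α * (t - s)) / 2) / (betaF (t - s) α) ^ 2)) := by
      have hE : Real.exp (α * (t - s)) = muF (t - s) α * betaF (t - s) α :=
        (muF_mul_betaF hα hts').symm
      rw [hg', hE, hC]
      simp only [UF]
      have := alg_key (muF s α) (betaF s α) (muF t α) (betaF t α) (muF (t - s) α)
        (betaF (t - s) α) z x hbs.ne' hbt.ne' hbd.ne' hmt.ne'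
      rw [this]
    rw [hval]
    exact h4
  -- nonnegativity of g'
  have hpos : ∀ t ∈ Ioi s, 0 ≤ g' t := by
    intro t ht
    have hts : s < t := ht
    have hts' : 0 < t - s := sub_pos.mpr hts
    have ht0 : 0 < t := hs.trans hts
    have hbd := betaF_pos_s18 hα hts'
    have hbs := betaF_pos_s18 hα hs
    have hbt := betaF_pos_s18 hα ht0
    have hmt := muF_pos_s18 hα ht0
    have hms := muF_pos_s18 hα hs
    have hmd := muF_pos_s18 hα hts'
    rw [hg']
    positivity
  -- limit at infinity
  have hlim : Tendsto g atTop (𝓝 C) := by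
    have hb : Tendsto (fun t => betaF (t - s) α) atTop atTop := by
      apply (betaF_tendsto_atTop hα).comp
      simpa [sub_eq_add_neg] using tendsto_atTop_add_const_right atTop (-s) tendsto_id
    have hinv : Tendsto (fun t => (betaF (t - s) α)⁻¹) atTop (𝓝 0) :=
      hb.inv_tendsto_atTop
    have h1 : Tendsto (fun t => -(z * (betaF (t - s) α)⁻¹)) atTop (𝓝 0) := by
      have := (hinv.const_mul z).neg
      simpa using this
    have h2 : Tendsto (fun t => Real.exp (-(z * (betaF (t - s) α)⁻¹))) atTop (𝓝 1) := by
      have := (Real.continuous_exp.tendsto 0).comp h1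
      simpa [Function.comp_def] using this
    have h3 := h2.const_mul C
    rw [mul_one] at h3
    apply h3.congr'
    filter_upwards [Ioi_mem_atTop s] with t ht
    simp [hg, not_le.mpr (mem_Ioi.mp ht)]
  have key := integral_Ioi_of_hasDerivAt_of_nonneg hcont hderiv hpos hlim
  have hgs : g s = 0 := by simp [hg]
  calc ∫ t in Set.Ioi s, g' t = C - g s := key
    _ = C := by rw [hgs, sub_zero]
end
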